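/- arXiv:2203.16081 — 2 statements merged into one kernel-verified Lean document; each statement's English description precedes it below -/
import Mathlib

section
/- Let q be an odd prime power, m > 1 dividing q+1, β primitive in F_{q^2}, ω = β^{q-1}, and α with α^2 = d a non-square in F_q^*. For 0 ≤ t_1 < t_2 ≤ q, the element αω^{t_2} - αω^{t_1} is an m-th power in F_{q^2}^* if and only if t_1 + t_2 ≡ 0 (mod m). -/
/-!
Write `ω = β ^ (q - 1)`, an element of order `q + 1`, and `x = α ω^{t₂} - α ω^{t₁}`.
As `α ∉ F_q` but `α² ∈ F_q`, the Frobenius sends `α` to `-α`; it sends `ω` to `ω⁻¹`, so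
`x ^ q = x ω^{-(t₁ + t₂)}`, that is `x ^ (q - 1) = ω^{-(t₁ + t₂)}`. In the cyclic group
`F_{q²}^*` of order `(q - 1)(q + 1)` the `m`-th powers are the kernel of
`y ↦ y ^ ((q - 1)(q + 1) / m)`, so `x` is an `m`-th power iff `ω^{-(t₁ + t₂)(q + 1) / m} = 1`,
iff `m ∣ t₁ + t₂`.
-/

section CyclicGroup

variable {G : Type*} [CommGroup G] [IsCyclic G] [Finite G]

theorem IsCyclic.exists_pow_eq_iff_pow_card_div_eq_one {m : ℕ} (hm : m ∣ Nat.card G) (g : G) :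
    (∃ δ, δ ^ m = g) ↔ g ^ (Nat.card G / m) = 1 := by
  have hle : (powMonoidHom m : G →* G).range ≤ (powMonoidHom (Nat.card G / m)).ker := by
    rintro _ ⟨δ, rfl⟩
    simp only [MonoidHom.mem_ker, powMonoidHom_apply, ← pow_mul, Nat.mul_div_cancel' hm,
      pow_card_eq_one']
  have heq := Subgroup.eq_of_le_of_card_ge hle (by
    rw [card_powMonoidHom_range, card_powMonoidHom_ker, Nat.gcd_eq_right hm,
      Nat.gcd_eq_right (Nat.div_dvd_of_dvd hm)])
  exact SetLike.ext_iff.mp heq g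

theorem IsCyclic.exists_pow_eq_iff_dvd_of_pow_eq_inv {a b m t : ℕ} {ω u : G}
    (hG : Nat.card G = a * b) (hω : orderOf ω = b) (hm : m ∣ b) (hu : u ^ a = (ω ^ t)⁻¹) :
    (∃ δ, δ ^ m = u) ↔ m ∣ t := by
  obtain ⟨c, rfl⟩ := hm
  have hmc : 0 < m * c := hω ▸ orderOf_pos ω
  rw [exists_pow_eq_iff_pow_card_div_eq_one (hG ▸ dvd_mul_of_dvd_right (dvd_mul_right m c) a),
    hG, mul_left_comm, Nat.mul_div_cancel_left _ (Nat.pos_of_mul_pos_right hmc), pow_mul, hu,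
    inv_pow, inv_eq_one, ← pow_mul, ← orderOf_dvd_iff_pow_eq_one, hω,
    Nat.mul_dvd_mul_iff_right (Nat.pos_of_mul_pos_left hmc)]

end CyclicGroup

theorem orderOf_pow_eq_of_card_eq_mul {G : Type*} [Group G] {β : G}
    (hβ : ∀ g : G, g ∈ Subgroup.zpowers β) {a b : ℕ} (hG : Nat.card G = a * b)
    (ha : a ≠ 0) : orderOf (β ^ a) = b := by
  have hord : orderOf β = a * b := by rw [orderOf_eq_card_of_forall_mem_zpowers hβ, hG]
  rw [orderOf_pow_of_dvd ha (hord ▸ dvd_mul_right a b), hord,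
    Nat.mul_div_cancel_left _ (Nat.pos_of_ne_zero ha)]

theorem pow_eq_neg_of_sq_pow_eq {R : Type*} [CommRing R] [NoZeroDivisors R] {a : R} {q : ℕ}
    (h : (a ^ 2) ^ q = a ^ 2) (hne : a ^ q ≠ a) : a ^ q = -a := by
  have hsq : (a ^ q) ^ 2 = a ^ 2 := by rw [← pow_mul, mul_comm, pow_mul, h]
  exact (sq_eq_sq_iff_eq_or_eq_neg.mp hsq).resolve_left hne

section Frobenius

variable {p : ℕ} [Fact p.Prime] {n : ℕ}

theorem sub_pow_char_pow_mul_pow_eq_self {R : Type*} [CommRing R] [CharP R p] {a w : R}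
    (ha : a ^ p ^ n = -a) (hw : w ^ (p ^ n + 1) = 1) (r s : ℕ) :
    (a * w ^ s - a * w ^ r) ^ p ^ n * w ^ (r + s) = a * w ^ s - a * w ^ r := by
  have hcycle : ∀ i j : ℕ, w ^ (i * p ^ n) * w ^ (i + j) = w ^ j := fun i j => by
    rw [← pow_add, show i * p ^ n + (i + j) = (p ^ n + 1) * i + j by ring, pow_add, pow_mul, hw,
      one_pow, one_mul]
  rw [sub_pow_char_pow, mul_pow, mul_pow, ha, ← pow_mul, ← pow_mul]
  linear_combination (-a) * hcycle s r + a * hcycle r s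

theorem Units.pow_char_pow_sub_one_eq_inv {F : Type*} [Field F] [CharP F p] {a : F}
    {ω u : Fˣ} (ha : a ^ p ^ n = -a) (hω : ω ^ (p ^ n + 1) = 1) {r s : ℕ}
    (hu : (u : F) = a * ω ^ s - a * ω ^ r) :
    u ^ (p ^ n - 1) = (ω ^ (r + s))⁻¹ := by
  have hω' : (ω : F) ^ (p ^ n + 1) = 1 := by rw [← Units.val_pow_eq_pow_val, hω, Units.val_one]
  have hfrob : u ^ p ^ n * ω ^ (r + s) = u := by
    ext
    push_cast [hu]
    exact sub_pow_char_pow_mul_pow_eq_self ha hω' r s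
  rw [eq_inv_iff_mul_eq_one]
  apply mul_left_cancel (a := u)
  rw [← mul_assoc, ← pow_succ',
    Nat.sub_add_cancel (Nat.one_le_pow _ _ (Fact.out : p.Prime).pos), hfrob, mul_one]

end Frobenius

theorem alpha_oval_adjacency_criterion_general
    (q m : ℕ) (hq : ∃ p n : ℕ, p.Prime ∧ Odd p ∧ 0 < n ∧ q = p ^ n)
    (hdvd : m ∣ q + 1)
    (F : Type*) [Field F] [Fintype F] (hF : Fintype.card F = q ^ 2)
    (β : Fˣ) (hβ : ∀ u : Fˣ, u ∈ Subgroup.zpowers β)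
    (d α : F) (hdq : d ^ q = d)
    (hns : ¬∃ s : F, s ^ q = s ∧ s ^ 2 = d) (hα : α ^ 2 = d)
    (t₁ t₂ : ℕ) (h12 : t₁ < t₂) (h2q : t₂ ≤ q) :
    (∃ δ : Fˣ, ((δ : F)) ^ m =
        α * (((β ^ (q - 1)) ^ t₂ : Fˣ) : F) - α * (((β ^ (q - 1)) ^ t₁ : Fˣ) : F)) ↔
      m ∣ (t₁ + t₂) := by
  obtain ⟨p, n, hp, -, hn, rfl⟩ := hq
  have : Fact p.Prime := ⟨hp⟩
  have : CharP F p := charP_of_card_eq_prime_pow (f := 2 * n) (by rw [hF, ← pow_mul, mul_comm])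
  set q := p ^ n
  set ω := β ^ (q - 1)
  have hq : 1 < q := Nat.one_lt_pow hn.ne' hp.one_lt
  have hcard : Nat.card Fˣ = (q - 1) * (q + 1) := by
    rw [Nat.card_units, Nat.card_eq_fintype_card, hF]
    simpa [mul_comm] using Nat.sq_sub_sq q 1
  have hω : orderOf ω = q + 1 := orderOf_pow_eq_of_card_eq_mul hβ hcard (by omega)
  have hαq : α ^ q = -α :=
    pow_eq_neg_of_sq_pow_eq (by rw [hα, hdq]) fun h => hns ⟨α, h, hα⟩
  have hα0 : α ≠ 0 := by
    rintro rfl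
    exact hns ⟨0, zero_pow hq.ne_bot, hα⟩
  have hωt : ω ^ t₂ ≠ ω ^ t₁ := fun h =>
    h12.ne' (pow_injOn_Iio_orderOf (by simp [hω]; omega) (by simp [hω]; omega) h)
  have hx : α * (ω ^ t₂ : Fˣ) - α * (ω ^ t₁ : Fˣ) ≠ 0 := by
    rw [← mul_sub]
    exact mul_ne_zero hα0 (sub_ne_zero.mpr (Units.val_injective.ne hωt))
  have hfrob := Units.pow_char_pow_sub_one_eq_inv hαq (hω ▸ pow_orderOf_eq_one ω)
    (u := Units.mk0 _ hx) (by push_cast; rfl)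
  rw [← IsCyclic.exists_pow_eq_iff_dvd_of_pow_eq_inv hcard hω hdvd hfrob]
  simp only [Units.ext_iff, Units.val_pow_eq_pow_val, Units.val_mk0]

/-- For `ω = β^{q-1}` and `α` with `α^2 = d` a non-square in `F_q^*`,
and `0 ≤ t₁ < t₂ ≤ q`, the element `αω^{t₂} - αω^{t₁}` is an `m`-th power in
`F_{q^2}^*` iff `t₁ + t₂ ≡ 0 (mod m)`. -/
theorem alpha_oval_adjacency_criterion
    (q m : ℕ) (hq : ∃ p n : ℕ, p.Prime ∧ Odd p ∧ 0 < n ∧ q = p ^ n)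
    (hm : 1 < m) (hdvd : m ∣ q + 1)
    (F : Type*) [Field F] [Fintype F] (hF : Fintype.card F = q ^ 2)
    (β : Fˣ) (hβ : ∀ u : Fˣ, u ∈ Subgroup.zpowers β)
    (d α : F) (hdq : d ^ q = d) (hd0 : d ≠ 0)
    (hns : ¬∃ s : F, s ^ q = s ∧ s ^ 2 = d) (hα : α ^ 2 = d)
    (t₁ t₂ : ℕ) (h12 : t₁ < t₂) (h2q : t₂ ≤ q) :
    (∃ δ : Fˣ, ((δ : F)) ^ m =
        α * (((β ^ (q - 1)) ^ t₂ : Fˣ) : F) - α * (((β ^ (q - 1)) ^ t₁ : Fˣ) : F)) ↔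
      m ∣ (t₁ + t₂) :=
  alpha_oval_adjacency_criterion_general q m hq hdvd F hF β hβ d α hdq hns hα t₁ t₂ h12 h2q
end

section
/- Let q be an odd prime power, m | (q+1), 2 ≤ m ≤ (q+1)/3, and let u, v be distinct elements of F_{q^2} \ F_q with u - v ∈ F_q and N(u) = N(v), where N(u) = {x ∈ F_q : u - x is an m-th power in F_{q^2}}. Then N(u) is a union of additive cosets of (u-v)F_p in F_q; in particular p divides m - 1. -/
/-!
Write `t = u - v ∈ F_q` and `δ = u^q - u ≠ 0`. Since `N(u) = N(v)` and `u - (x + t) = v - x`,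
`N(u)` is invariant under `x ↦ x + t`, hence under translation by `t F_p`, and its size is
divisible by `p`. On the other hand `x ↦ u - x` identifies `N(u)` with the nonzero `m`-th powers
`w` satisfying `w^q - w = δ`. Every element of `F_q^*` is an `m`-th power because `m ∣ q + 1`, and
each nonzero `m`-th power `z ∉ F_q` is uniquely `c w` with `c ∈ F_q^*` and `w^q - w = δ`, namely
`c = (z^q - z) / δ`. Counting, `(q - 1) |N(u)| = (q^2 - 1) / m - (q - 1)`, so
`|N(u)| = (q + 1) / m - 1`; as `p ∣ q`, `p ∣ |N(u)|` forces `p ∣ m - 1`.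
-/

/-- The `F_q`-neighbourhood `N(w) = {x ∈ F_q : w - x is an m-th power in F_{q^2}}`,
with `F_q` identified with `{x | x^q = x}`. -/
def Nbhd (q m : ℕ) {F : Type*} [Field F] (w : F) : Set F :=
  {x | x ^ q = x ∧ ∃ y : F, y ≠ 0 ∧ y ^ m = w - x}

theorem prime_dvd_ncard_of_mapsTo_add_right {G : Type*} [AddGroup G] {p : ℕ} [hp : Fact p.Prime]
    {t : G} (ht : addOrderOf t = p) {s : Set G} (hs : s.Finite)
    (hst : Set.MapsTo (· + t) s s) : p ∣ s.ncard := by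
  classical
  have := hs.fintype
  let f : Function.End s := hst.restrict
  have hf : f ^ p ^ 1 = 1 := by
    rw [pow_one]
    funext x
    have hpow := congrFun (hom_coe_pow (fun g : Function.End s ↦ (g : s → s)) rfl
      (fun _ _ ↦ rfl) f p) x
    refine Subtype.ext ((congrArg Subtype.val hpow).trans ?_)
    rw [Set.MapsTo.iterate_restrict, Set.MapsTo.val_restrict_apply, add_right_iterate, ← ht,
      addOrderOf_nsmul_eq_zero]
    exact add_zero (x : G)
  have hfix : IsEmpty f.fixedPoints := by
    refine ⟨fun ⟨x, hx⟩ => hp.out.one_lt.ne ?_⟩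
    have : (x : G) + t = x := congrArg Subtype.val hx
    rw [add_eq_left] at this
    rw [← ht, this, addOrderOf_zero]
  have := Equiv.Perm.card_fixedPoints_modEq hf
  rwa [Fintype.card_eq_zero (α := f.fixedPoints), Nat.modEq_zero_iff_dvd,
    ← Nat.card_eq_fintype_card, Nat.card_coe_set_eq] at this

open Polynomial in
theorem exists_natCast_eq_of_pow_eq_self {F : Type*} [Field F] (p : ℕ) [hp : Fact p.Prime]
    [CharP F p] {c : F} (hc : c ^ p = c) : ∃ k : ℕ, (k : F) = c := by
  let ι := ZMod.castHom (dvd_refl p) F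
  have hroots_ZMod : (X ^ p - X : (ZMod p)[X]).roots = Finset.univ.val := by
    simpa only [ZMod.card] using FiniteField.roots_X_pow_card_sub_X (ZMod p)
  -- `X ^ p - X` already has all its `p` roots in `ZMod p`, so it has no others in `F`
  have hroots : (X ^ p - X : (ZMod p)[X]).roots.map ι = (X ^ p - X : F[X]).roots := by
    convert roots_map_of_injective_of_card_eq_natDegree ι.injective ?_ using 2
    · simp only [Polynomial.map_sub, Polynomial.map_pow, map_X]
    rw [hroots_ZMod, FiniteField.X_pow_card_sub_X_natDegree_eq _ hp.out.one_lt]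
    simp
  have hmem : c ∈ (X ^ p - X : F[X]).roots := by
    rw [mem_roots (FiniteField.X_pow_card_sub_X_ne_zero F hp.out.one_lt)]
    simp [hc]
  rw [← hroots, Multiset.mem_map] at hmem
  obtain ⟨a, -, rfl⟩ := hmem
  exact ⟨a.val, by simp [ι]⟩

theorem add_mul_mem_of_mapsTo_add_right {F : Type*} [Field F] {p : ℕ} [Fact p.Prime] [CharP F p]
    {s : Set F} {t : F} (hst : Set.MapsTo (· + t) s s) {x c : F} (hx : x ∈ s)
    (hc : c ^ p = c) : x + t * c ∈ s := by
  obtain ⟨k, rfl⟩ := exists_natCast_eq_of_pow_eq_self p hc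
  have := hst.iterate k hx
  rwa [add_right_iterate, nsmul_eq_mul, mul_comm] at this

theorem setOf_ne_zero_and_pow_eq_self {M₀ : Type*} [MonoidWithZero M₀] [IsCancelMulZero M₀]
    {q : ℕ} (hq : q ≠ 0) : {c : M₀ | c ≠ 0 ∧ c ^ q = c} = {c | c ≠ 0 ∧ c ^ (q - 1) = 1} := by
  ext c
  refine and_congr_right fun hc => ?_
  rw [← pow_sub_one_mul hq, mul_eq_right₀ hc]

theorem IsCyclic.exists_pow_eq_of_pow_eq_one {G : Type*} [Group G] [IsCyclic G] [Finite G]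
    {a b : ℕ} (hab : Nat.card G = a * b) {x : G} (hx : x ^ a = 1) : ∃ y : G, y ^ b = x := by
  obtain ⟨g, hg⟩ := IsCyclic.exists_generator (α := G)
  obtain ⟨k, rfl⟩ := Subgroup.mem_zpowers_iff.mp (hg x)
  have ha : a ≠ 0 := by rintro rfl; exact Nat.card_pos.ne' (by rw [hab, zero_mul])
  have hdvd : ((a * b : ℕ) : ℤ) ∣ k * a := by
    rw [← hab, ← orderOf_eq_card_of_forall_mem_zpowers hg, orderOf_dvd_iff_zpow_eq_one, zpow_mul]
    exact_mod_cast hx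
  obtain ⟨j, rfl⟩ : (b : ℤ) ∣ k := by
    rw [Nat.cast_mul, mul_comm k] at hdvd
    exact (mul_dvd_mul_iff_left (by exact_mod_cast ha)).mp hdvd
  exact ⟨g ^ j, by rw [← zpow_natCast, ← zpow_mul, mul_comm]⟩

theorem ncard_image_units_val {M : Type*} [Monoid M] (S : Subgroup Mˣ) :
    (Units.val '' (S : Set Mˣ)).ncard = Nat.card S := by
  rw [Set.ncard_image_of_injective _ Units.val_injective]
  exact (Nat.card_coe_set_eq _).symm

section FiniteField

variable {F : Type*} [Field F] [Finite F]

theorem FiniteField.ncard_setOf_exists_pow_eq (m : ℕ) :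
    {z : F | ∃ y, y ≠ 0 ∧ y ^ m = z}.ncard = (Nat.card F - 1) / (Nat.card F - 1).gcd m := by
  have himage : {z : F | ∃ y, y ≠ 0 ∧ y ^ m = z} =
      Units.val '' ((powMonoidHom m : Fˣ →* Fˣ).range : Set Fˣ) := by
    ext z
    constructor
    · rintro ⟨y, hy, rfl⟩
      exact ⟨Units.mk0 y hy ^ m, ⟨_, rfl⟩, by simp⟩
    · rintro ⟨_, ⟨y, rfl⟩, rfl⟩
      exact ⟨y, y.ne_zero, by simp⟩
  rw [himage, ncard_image_units_val, IsCyclic.card_powMonoidHom_range, Nat.card_units]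

theorem FiniteField.ncard_setOf_pow_eq_one (d : ℕ) :
    {z : F | z ≠ 0 ∧ z ^ d = 1}.ncard = (Nat.card F - 1).gcd d := by
  have himage : {z : F | z ≠ 0 ∧ z ^ d = 1} =
      Units.val '' ((powMonoidHom d : Fˣ →* Fˣ).ker : Set Fˣ) := by
    ext z
    constructor
    · rintro ⟨hz, hzd⟩
      exact ⟨Units.mk0 z hz, by simp [Units.ext_iff, hzd], rfl⟩
    · rintro ⟨y, hy, rfl⟩
      exact ⟨y.ne_zero, by simpa [Units.ext_iff] using hy⟩
  rw [himage, ncard_image_units_val, IsCyclic.card_powMonoidHom_ker, Nat.card_units]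

theorem FiniteField.setOf_pow_sub_one_eq_one_subset {q m : ℕ} (hF : Nat.card F = q ^ 2)
    (hm : m ∣ q + 1) : {c : F | c ≠ 0 ∧ c ^ (q - 1) = 1} ⊆ {z | ∃ y, y ≠ 0 ∧ y ^ m = z} := by
  rintro c ⟨hc, hcq⟩
  obtain ⟨k, hk⟩ := hm
  have hcard : Nat.card Fˣ = (q - 1) * (q + 1) := by
    rw [Nat.card_units, hF, mul_comm, ← Nat.sq_sub_sq, one_pow]
  obtain ⟨y, hy⟩ := IsCyclic.exists_pow_eq_of_pow_eq_one hcard (x := Units.mk0 c hc)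
    (Units.ext (by simpa using hcq))
  refine ⟨((y ^ k : Fˣ) : F), Units.ne_zero _, ?_⟩
  rw [← Units.val_pow_eq_pow_val, ← pow_mul, mul_comm, ← hk, hy, Units.val_mk0]

end FiniteField

theorem RingHom.ncard_fixed_mul_ncard_setOf_sub_eq {F : Type*} [Field F] (σ : F →+* F)
    (hσ : Function.Involutive σ) {δ : F} (hδ : δ ≠ 0) (hσδ : σ δ = -δ) (A : Set F)
    (hA : ∀ c z, c ≠ 0 → σ c = c → z ∈ A → c * z ∈ A) :
    {c : F | c ≠ 0 ∧ σ c = c}.ncard * {z ∈ A | σ z - z = δ}.ncard =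
      {z ∈ A | σ z ≠ z}.ncard := by
  have hσ_mul {c : F} (hc : σ c = c) (z : F) : σ (c * z) - c * z = c * (σ z - z) := by
    rw [map_mul, hc]; ring
  have hσ_ratio (z : F) : σ ((σ z - z) / δ) = (σ z - z) / δ := by
    rw [map_div₀, map_sub, hσ z, hσδ, ← neg_sub, neg_div_neg_eq]
  rw [← Set.ncard_prod]
  refine Set.ncard_congr (fun a _ => a.1 * a.2) ?_ ?_ ?_
  · rintro ⟨c, w⟩ ⟨⟨hc, hσc⟩, hw, hσw⟩
    refine ⟨hA c w hc hσc hw, fun h => hδ ?_⟩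
    have := hσ_mul hσc w
    rw [h, sub_self, hσw, zero_eq_mul] at this
    exact this.resolve_left hc
  · rintro ⟨c, w⟩ ⟨c', w'⟩ ⟨⟨hc, hσc⟩, -, hσw⟩ ⟨⟨hc', hσc'⟩, -, hσw'⟩ (h : c * w = c' * w')
    have hcc' : c = c' := by
      have := hσ_mul hσc w
      rw [hσw, h, hσ_mul hσc' w', hσw'] at this
      exact (mul_right_cancel₀ hδ this).symm
    subst hcc'
    exact Prod.ext rfl (mul_left_cancel₀ hc h)
  · rintro z ⟨hz, hσz⟩
    set r := (σ z - z) / δ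
    have hr : r ≠ 0 := div_ne_zero (sub_ne_zero.mpr hσz) hδ
    have hσr_inv : σ r⁻¹ = r⁻¹ := by rw [map_inv₀, hσ_ratio]
    refine ⟨(r, r⁻¹ * z), ⟨⟨hr, hσ_ratio z⟩, hA _ z (inv_ne_zero hr) hσr_inv hz, ?_⟩,
      mul_inv_cancel_left₀ hr z⟩
    rw [hσ_mul hσr_inv, inv_mul_eq_div, div_div_cancel₀ (sub_ne_zero.mpr hσz)]

section Nbhd

variable {F : Type*} [Field F] {p n m : ℕ} [ExpChar F p]

theorem mapsTo_add_sub_nbhd_of_nbhd_eq {u v : F} (huv : (u - v) ^ p ^ n = u - v)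
    (hN : Nbhd (p ^ n) m u = Nbhd (p ^ n) m v) :
    Set.MapsTo (· + (u - v)) (Nbhd (p ^ n) m u) (Nbhd (p ^ n) m u) := by
  intro x hx
  rw [hN] at hx
  obtain ⟨hxq, y, hy, hym⟩ := hx
  exact ⟨by rw [add_pow_expChar_pow, hxq, huv], y, hy, by rw [hym]; ring⟩

theorem image_sub_nbhd (u : F) :
    (u - ·) '' Nbhd (p ^ n) m u = {w ∈ {z : F | ∃ y, y ≠ 0 ∧ y ^ m = z} |
      iterateFrobenius F p n w - w = iterateFrobenius F p n u - u} := by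
  ext w
  simp only [iterateFrobenius_def]
  constructor
  · rintro ⟨x, ⟨hxq, hx⟩, rfl⟩
    exact ⟨hx, by rw [sub_pow_expChar_pow, hxq]; ring⟩
  · rintro ⟨hw, hwq⟩
    refine ⟨u - w, ⟨?_, by rwa [sub_sub_cancel]⟩, sub_sub_cancel u w⟩
    rw [sub_pow_expChar_pow]
    linear_combination -hwq

theorem iterateFrobenius_involutive [Fintype F] (hF : Fintype.card F = (p ^ n) ^ 2) :
    Function.Involutive (iterateFrobenius F p n) := fun x => by
  rw [iterateFrobenius_def, iterateFrobenius_def, ← pow_mul, ← sq, ← hF, FiniteField.pow_card]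

theorem ncard_nbhd [Fintype F] (hF : Fintype.card F = (p ^ n) ^ 2) (hm : m ∣ p ^ n + 1) {u : F}
    (hu : u ^ p ^ n ≠ u) : (Nbhd (p ^ n) m u).ncard = (p ^ n + 1) / m - 1 := by
  have hF' : Nat.card F = (p ^ n) ^ 2 := by rw [Nat.card_eq_fintype_card, hF]
  have hq : 2 ≤ p ^ n := by
    have := hF ▸ Fintype.one_lt_card (α := F)
    by_contra! h
    interval_cases (p ^ n) <;> simp at this
  rw [← Set.ncard_image_of_injective _ (sub_right_injective (b := u)), image_sub_nbhd]
  set σ := iterateFrobenius F p n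
  set P := {z : F | ∃ y, y ≠ 0 ∧ y ^ m = z}
  set K := {c : F | c ≠ 0 ∧ σ c = c}
  have hσ : Function.Involutive σ := iterateFrobenius_involutive hF
  have hσδ : σ (σ u - u) = -(σ u - u) := by rw [map_sub, hσ u, neg_sub]
  have hK : K = {c : F | c ≠ 0 ∧ c ^ (p ^ n - 1) = 1} := by
    simp only [K, σ, iterateFrobenius_def]
    exact setOf_ne_zero_and_pow_eq_self (by omega)
  have hKP : K ⊆ P := hK ▸ FiniteField.setOf_pow_sub_one_eq_one_subset hF' hm
  have hPK : {z ∈ P | σ z ≠ z} = P \ K := by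
    ext z
    refine ⟨fun ⟨hz, hσz⟩ => ⟨hz, fun h => hσz h.2⟩, fun ⟨hz, hzK⟩ => ⟨hz, fun h => hzK ⟨?_, h⟩⟩⟩
    obtain ⟨y, hy, rfl⟩ := hz
    exact pow_ne_zero m hy
  have hKP_mul (c z : F) (hc : c ≠ 0) (hσc : σ c = c) : z ∈ P → c * z ∈ P := by
    rintro ⟨y, hy, rfl⟩
    obtain ⟨y', hy', rfl⟩ := hKP ⟨hc, hσc⟩
    exact ⟨y' * y, mul_ne_zero hy' hy, mul_pow y' y m⟩
  have hcount : K.ncard * {w ∈ P | σ w - w = σ u - u}.ncard = {z ∈ P | σ z ≠ z}.ncard :=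
    σ.ncard_fixed_mul_ncard_setOf_sub_eq hσ (sub_ne_zero.mpr hu) hσδ P hKP_mul
  have hsq : (p ^ n) ^ 2 - 1 = (p ^ n - 1) * (p ^ n + 1) := by
    rw [mul_comm, ← Nat.sq_sub_sq, one_pow]
  rw [hPK, Set.ncard_sdiff hKP, hK, FiniteField.ncard_setOf_pow_eq_one,
    FiniteField.ncard_setOf_exists_pow_eq, hF', hsq, Nat.gcd_eq_right (dvd_mul_right _ _),
    Nat.gcd_eq_right (dvd_mul_of_dvd_right hm _), Nat.mul_div_assoc _ hm,
    ← Nat.mul_sub_one] at hcount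
  exact Nat.eq_of_mul_eq_mul_left (by omega) hcount

end Nbhd

theorem Nat.dvd_sub_one_of_dvd_div_sub_one {p q m : ℕ} (hpq : p ∣ q) (hm : m ∣ q + 1)
    (h : p ∣ (q + 1) / m - 1) : p ∣ m - 1 := by
  obtain ⟨k, hk⟩ := hm
  have hm0 : 0 < m := Nat.pos_of_ne_zero (by rintro rfl; omega)
  have hk0 : 1 ≤ k := Nat.pos_of_ne_zero (by rintro rfl; omega)
  rw [hk, Nat.mul_div_cancel_left _ hm0] at h
  rw [← ZMod.natCast_eq_zero_iff] at hpq h ⊢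
  have hk' : ((q + 1 : ℕ) : ZMod p) = ((m * k : ℕ) : ZMod p) := congrArg _ hk
  push_cast [Nat.cast_sub hm0, Nat.cast_sub hk0] at hk' h ⊢
  linear_combination -(m : ZMod p) * h - hk' + hpq

theorem same_nbhd_horizontal_general
    (p n q m : ℕ) (hp : p.Prime) (hn : 0 < n) (hqpn : q = p ^ n)
    (hdvd : m ∣ q + 1)
    (F : Type*) [Field F] [Fintype F] (hF : Fintype.card F = q ^ 2)
    (u v : F) (huv : u ≠ v) (hu : u ^ q ≠ u)
    (huvFq : (u - v) ^ q = u - v)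
    (hN : Nbhd q m u = Nbhd q m v) :
    (∀ x ∈ Nbhd q m u, ∀ c : F, c ^ p = c → x + (u - v) * c ∈ Nbhd q m u) ∧
    p ∣ (m - 1) := by
  have := Fact.mk hp
  subst hqpn
  have : CharP F p := charP_of_card_eq_prime_pow (hF.trans (pow_mul p n 2).symm)
  have hmaps := mapsTo_add_sub_nbhd_of_nbhd_eq huvFq hN
  refine ⟨fun x hx c hc => add_mul_mem_of_mapsTo_add_right hmaps hx hc, ?_⟩
  have hord : addOrderOf (u - v) = p :=
    addOrderOf_eq_prime (by rw [nsmul_eq_mul, CharP.cast_eq_zero, zero_mul]) (sub_ne_zero.mpr huv)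
  have hcard := prime_dvd_ncard_of_mapsTo_add_right hord (Set.toFinite _) hmaps
  rw [ncard_nbhd hF hdvd hu] at hcard
  exact Nat.dvd_sub_one_of_dvd_div_sub_one (dvd_pow_self p hn.ne') hdvd hcard

/-- If `u ≠ v` lie in `F_{q^2} \ F_q`, `u - v ∈ F_q`, and `N(u) = N(v)`,
then `N(u)` is a union of additive cosets of `(u-v)F_p` in `F_q`; in particular
`p ∣ m - 1`. -/
theorem same_nbhd_horizontal
    (p n q m : ℕ) (hp : p.Prime) (hpo : Odd p) (hn : 0 < n) (hqpn : q = p ^ n)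
    (hdvd : m ∣ q + 1) (hm2 : 2 ≤ m) (hm3 : 3 * m ≤ q + 1)
    (F : Type*) [Field F] [Fintype F] (hF : Fintype.card F = q ^ 2)
    (u v : F) (huv : u ≠ v) (hu : u ^ q ≠ u) (hv : v ^ q ≠ v)
    (huvFq : (u - v) ^ q = u - v)
    (hN : Nbhd q m u = Nbhd q m v) :
    (∀ x ∈ Nbhd q m u, ∀ c : F, c ^ p = c → x + (u - v) * c ∈ Nbhd q m u) ∧
    p ∣ (m - 1) :=
  same_nbhd_horizontal_general p n q m hp hn hqpn hdvd F hF u v huv hu huvFq hN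
end
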